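/- Let T be a tree Mealy machine with finite output alphabet O and U ⊆ Q^T a finite set of states with E(U) > 0. Let σ = i₁ … i_ℓ ∈ I* be the input word along any maximal ADS path from U, i.e., there are sets U = U₀, U₁, …, U_ℓ and outputs o₁, …, o_ℓ such that for each j, i_j ∈ inp(U_{j−1}) attains the maximum in the definition of E(U_{j−1}), U_j = U_{j−1}→^{i_j/o_j} is nonempty, and inp(U_ℓ) = ∅. Then there exist r, r' ∈ U and a prefix τ of σ with λ^T(r, τ) and λ^T(r', τ) both defined and λ^T(r, τ) ≠ λ^T(r', τ); in particular σ has a prefix witnessing r # r'. -/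

import Mathlib

open scoped Classical

/-- A Mealy machine over input alphabet `I` and output alphabet `O`, with state
type `Q`, initial state `q0`, and a partial combined output/transition map
`trans : Q × I ⇀ O × Q` (so the output and transition functions are defined on
exactly the same pairs). -/
structure Mealy (Q I O : Type) where
  q0 : Q
  trans : Q → I → Option (O × Q)

namespace Mealy

variable {Q Q' I O : Type}

/-- Extension of the combined output/transition map to input words. -/
def stepStar (M : Mealy Q I O) : Q → List I → Option (List O × Q)
  | q, [] => some ([], q)
  | q, i :: σ => (M.trans q i).bind fun p =>
      (stepStar M p.2 σ).map fun r => (p.1 :: r.1, r.2)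

/-- `λ(q, σ)`: the output word produced from `q` on input word `σ` (if defined);
this is also the semantics `⟦q⟧ : I* ⇀ O*` of the state `q`. -/
def outStar (M : Mealy Q I O) (q : Q) (σ : List I) : Option (List O) :=
  (M.stepStar q σ).map Prod.fst

/-- `δ(q, σ)`: the state reached from `q` on input word `σ` (if defined). -/
def delStar (M : Mealy Q I O) (q : Q) (σ : List I) : Option Q :=
  (M.stepStar q σ).map Prod.snd

/-- `σ ⊢ q # p`: the word `σ` witnesses apartness of `q` and `p`. -/
def ApartW (M : Mealy Q I O) (σ : List I) (q p : Q) : Prop :=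
  (M.outStar q σ).isSome ∧ (M.outStar p σ).isSome ∧ M.outStar q σ ≠ M.outStar p σ

/-- `q # p`: states `q` and `p` are apart. -/
def Apart (M : Mealy Q I O) (q p : Q) : Prop := ∃ σ, M.ApartW σ q p

/-- `q ≈ r`: states `q` (of `M`) and `r` (of `N`) are equivalent, i.e. have equal
semantics `⟦q⟧ = ⟦r⟧` as partial maps `I* ⇀ O*`. -/
def StateEquiv (M : Mealy Q I O) (N : Mealy Q' I O) (q : Q) (r : Q') : Prop :=
  ∀ σ, M.outStar q σ = N.outStar r σ

/-- A functional simulation `f : M → N`. -/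
def FunSim (M : Mealy Q I O) (N : Mealy Q' I O) (f : Q → Q') : Prop :=
  f M.q0 = N.q0 ∧
    ∀ q i o q'', M.trans q i = some (o, q'') → N.trans (f q) i = some (o, f q'')

/-- A Mealy machine is complete if its transition map is total. -/
def Complete (M : Mealy Q I O) : Prop := ∀ q i, (M.trans q i).isSome

/-- A Mealy machine is a tree if every state is reached from the root by a
unique input word (its access sequence). -/
def IsTree (M : Mealy Q I O) : Prop :=
  ∀ q : Q, ∃! σ : List I, M.delStar M.q0 σ = some q

/-- `S` is a basis of the observation tree `T`: a subtree containing the root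
whose states are pairwise apart. -/
structure IsBasis (T : Mealy Q I O) (S : Set Q) : Prop where
  root_mem : T.q0 ∈ S
  subtree_closed : ∀ q i o q', T.trans q i = some (o, q') → q' ∈ S → q ∈ S
  pairwise_apart : ∀ p ∈ S, ∀ q ∈ S, p ≠ q → T.Apart p q

/-- The frontier `F`: immediate non-basis successors of basis states. -/
def frontier (T : Mealy Q I O) (S : Set Q) : Set Q :=
  {q' | q' ∉ S ∧ ∃ q ∈ S, ∃ i o, T.trans q i = some (o, q')}

/-- The basis `S` is complete: each basis state has a transition for each input. -/
def BasisComplete (T : Mealy Q I O) (S : Set Q) : Prop :=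
  ∀ q ∈ S, ∀ i : I, (T.trans q i).isSome

/-- A Mealy machine `H` with state set `S` contains the basis `S` of `T`:
`δ^H(q0^H, access(q)) = q` for every `q ∈ S`. -/
def ContainsBasis (T : Mealy Q I O) (S : Set Q) (H : Mealy ↥S I O) : Prop :=
  ∀ (q : ↥S) (σ : List I), T.delStar T.q0 σ = some (q : Q) → H.delStar H.q0 σ = some q

/-- `H` is a hypothesis for the observation tree `T` with basis `S`. -/
def IsHypothesis (T : Mealy Q I O) (S : Set Q) (H : Mealy ↥S I O) : Prop :=
  H.Complete ∧ ContainsBasis T S H ∧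
    ∀ (q : ↥S) (i : I) (o' : O) (p' : ↥S), H.trans q i = some (o', p') →
      ∀ (o : O) (p : Q), T.trans (q : Q) i = some (o, p) → o = o' ∧ ¬ T.Apart p (p' : Q)

/-- The equivalence `≈` on the states of a single machine, as a setoid. -/
def equivSetoid (M : Mealy Q I O) : Setoid Q :=
  ⟨fun q r => M.StateEquiv M q r,
   ⟨fun _ _ => rfl, fun h σ => (h σ).symm, fun h1 h2 σ => (h1 σ).trans (h2 σ)⟩⟩

/-- `R` is a bisimulation between `M` and `N`. -/
def IsBisimulation (M : Mealy Q I O) (N : Mealy Q' I O) (R : Q → Q' → Prop) : Prop :=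
  R M.q0 N.q0 ∧
    ∀ q r, R q r → ∀ i o q', M.trans q i = some (o, q') →
      ∃ r', N.trans r i = some (o, r') ∧ R q' r'


/-- `inp(U)`: inputs enabled in some state of `U`. -/
noncomputable def inpSet [Fintype I] (M : Mealy Q I O) (U : Set Q) : Finset I :=
  Finset.univ.filter fun i => ∃ q ∈ U, (M.trans q i).isSome

/-- `U →^i`: the states of `U` where input `i` is enabled. -/
def arrowSet (M : Mealy Q I O) (U : Set Q) (i : I) : Set Q :=
  {q ∈ U | (M.trans q i).isSome}

/-- `U →^{i/o}`: the `i/o`-successors of states in `U`. -/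
def stepSet (M : Mealy Q I O) (U : Set Q) (i : I) (o : O) : Set Q :=
  {q' | ∃ q ∈ U, M.trans q i = some (o, q')}

/-- The inner expression of the expected-reward recurrence for input `i`, where
`E'` plays the role of the recursive call. -/
noncomputable def rewardAux [Fintype O] (M : Mealy Q I O) (E' : Set Q → ℚ)
    (U : Set Q) (i : I) : ℚ :=
  ∑ o : O,
    ((M.stepSet U i o).ncard : ℚ) *
        (((M.arrowSet U i).ncard : ℚ) - ((M.stepSet U i o).ncard : ℚ)
          + E' (M.stepSet U i o))
      / ((M.arrowSet U i).ncard : ℚ)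

/-- Fueled version of the expected reward `E(U)`; the maximum over the empty
set is `0`. -/
noncomputable def Efuel [Fintype I] [Fintype O] (M : Mealy Q I O) :
    ℕ → Set Q → ℚ
  | 0, _ => 0
  | n + 1, U => ((M.inpSet U).image (M.rewardAux (M.Efuel n) U)).max.unbotD 0

/-- The expected reward `E(U)`.  Since in a tree Mealy machine with finite state
space every chain `U, U→^{i/o}, …` reaches a set with no enabled inputs within
`Fintype.card Q` steps, fuel `Fintype.card Q + 1` realizes the recursive
definition `E(U) = max_{i ∈ inp(U)} Σ_o |U→^{i/o}|·(|U→^i| − |U→^{i/o}| + E(U→^{i/o}))/|U→^i|`. -/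
noncomputable def expectedReward [Fintype Q] [Fintype I] [Fintype O]
    (M : Mealy Q I O) (U : Set Q) : ℚ :=
  M.Efuel (Fintype.card Q + 1) U

/-- The value of the expression inside the maximum defining `E(U)`, for a given
input `i`; an input `i ∈ inp(U)` attains the maximum in the definition of
`E(U)` iff `rewardFor M U i = expectedReward M U`. -/
noncomputable def rewardFor [Fintype Q] [Fintype I] [Fintype O]
    (M : Mealy Q I O) (U : Set Q) (i : I) : ℚ :=
  M.rewardAux (M.Efuel (Fintype.card Q)) U i

end Mealy

/-!
If some step of the path splits, i.e. two states of `Uⱼ` answer `iⱼ₊₁` with different outputs,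
their ancestors in `U` are separated by `i₁ ⋯ iⱼ₊₁`. Otherwise the expected reward never drops
along the path: when all enabled states of `Uⱼ` give the same output, the tree structure makes
`q ↦ δ(q, iⱼ₊₁)` injective, so `|Uⱼ₊₁| = |Uⱼ→^{iⱼ₊₁}|` and the reward of `iⱼ₊₁` collapses to
`E(Uⱼ₊₁)`. That would give `0 < E(U) ≤ E(U_ℓ) = 0`.
-/

section MaxImage

variable {α β : Type*} [LinearOrder β] {s : Finset α} {f g : α → β} {d : β}

theorem Finset.le_unbotD_max_image (h : ∀ a ∈ s, d ≤ f a) : d ≤ (s.image f).max.unbotD d := by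
  rcases s.eq_empty_or_nonempty with rfl | ⟨a, ha⟩
  · simp
  · exact WithBot.le_unbotD
      ((WithBot.coe_le_coe.2 (h a ha)).trans (Finset.le_max (Finset.mem_image_of_mem f ha)))

theorem Finset.unbotD_max_image_mono (h : ∀ a ∈ s, f a ≤ g a) :
    (s.image f).max.unbotD d ≤ (s.image g).max.unbotD d := by
  rcases s.eq_empty_or_nonempty with rfl | hs
  · simp
  · refine WithBot.unbotD_mono (mt Finset.max_eq_bot.1 (hs.image f).ne_empty)
      (Finset.max_le fun b hb => ?_)
    obtain ⟨a, ha, rfl⟩ := Finset.mem_image.1 hb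
    exact (WithBot.coe_le_coe.2 (h a ha)).trans (Finset.le_max (Finset.mem_image_of_mem g ha))

end MaxImage

theorem List.ofFn_prefix_ofFn {α : Type*} (f : ℕ → α) {m n : ℕ} (h : m ≤ n) :
    (List.ofFn fun k : Fin m => f k) <+: List.ofFn fun k : Fin n => f k := by
  show List.ofFn (Fin.take m h fun k : Fin n => f k) <+: _
  rw [Fin.ofFn_take_eq_take_ofFn]
  exact List.take_prefix _ _

namespace Mealy

variable {Q I O : Type} (M : Mealy Q I O)

section Runs

theorem stepStar_append (q : Q) (σ τ : List I) :
    M.stepStar q (σ ++ τ) = (M.stepStar q σ).bind fun r =>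
      (M.stepStar r.2 τ).map fun s => (r.1 ++ s.1, s.2) := by
  induction σ generalizing q with
  | nil => simp [stepStar]
  | cons i σ ih =>
    rcases h : M.trans q i with _ | ⟨o, p⟩
    · simp [stepStar, h]
    · cases h' : M.stepStar p σ <;> simp [stepStar, h, h', ih, Function.comp_def]

variable {M}

theorem stepStar_append_singleton {q r p : Q} {σ : List I} {w : List O} {i : I} {o : O}
    (h : M.stepStar q σ = some (w, r)) (hr : M.trans r i = some (o, p)) :
    M.stepStar q (σ ++ [i]) = some (w ++ [o], p) := by
  simp [stepStar_append, h, stepStar, hr]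

theorem stepStar_ofFn_succ {ins : ℕ → I} {j : ℕ} {q r p : Q} {w : List O} {o : O}
    (h : M.stepStar q (List.ofFn fun k : Fin j => ins k) = some (w, r))
    (hr : M.trans r (ins j) = some (o, p)) :
    M.stepStar q (List.ofFn fun k : Fin (j + 1) => ins k) = some (w ++ [o], p) := by
  rw [List.ofFn_succ_last]
  exact stepStar_append_singleton h hr

theorem exists_stepStar_of_mem {Us : ℕ → Set Q} {ins : ℕ → I} {outs : ℕ → O} {j : ℕ}
    (hstep : ∀ k < j, Us (k + 1) = M.stepSet (Us k) (ins k) (outs k)) {q : Q} (hq : q ∈ Us j) :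
    ∃ r ∈ Us 0, M.stepStar r (List.ofFn fun k : Fin j => ins k) =
      some (List.ofFn fun k : Fin j => outs k, q) := by
  induction j generalizing q with
  | zero => exact ⟨q, hq, rfl⟩
  | succ j ih =>
    rw [hstep j j.lt_succ_self] at hq
    obtain ⟨p, hp, hpq⟩ := hq
    obtain ⟨r, hr, hrp⟩ := ih (fun k hk => hstep k (hk.trans j.lt_succ_self)) hp
    refine ⟨r, hr, ?_⟩
    rw [List.ofFn_succ_last (f := fun k : Fin (j + 1) => outs k)]
    exact stepStar_ofFn_succ hrp hpq

theorem IsTree.eq_of_trans_eq_some (htree : M.IsTree) {q p s : Q} {i : I} {o o' : O}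
    (hq : M.trans q i = some (o, s)) (hp : M.trans p i = some (o', s)) : q = p := by
  have access_append : ∀ {r σ o}, M.delStar M.q0 σ = some r → M.trans r i = some (o, s) →
      M.delStar M.q0 (σ ++ [i]) = some s := by
    intro r σ o hσ hr
    obtain ⟨w, hw⟩ : ∃ w, M.stepStar M.q0 σ = some (w, r) := by simpa [delStar] using hσ
    simp [delStar, stepStar_append_singleton hw hr]
  obtain ⟨σq, hσq, -⟩ := htree q
  obtain ⟨σp, hσp, -⟩ := htree p
  obtain ⟨_, -, huniq⟩ := htree s
  obtain rfl : σq = σp := by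
    simpa using (huniq _ (access_append hσq hq)).trans (huniq _ (access_append hσp hp)).symm
  simpa [hσq] using hσp

end Runs

section Reward

/-- The `i`-successor of `q`; where `i` is not enabled at `q` it is the junk value `q`. -/
def target (i : I) (q : Q) : Q := ((M.trans q i).map Prod.snd).getD q

variable {M}

theorem target_eq_of_trans_eq_some {q p : Q} {i : I} {o : O}
    (h : M.trans q i = some (o, p)) : M.target i q = p := by
  simp [target, h]

variable {U : Set Q} {i : I}

theorem stepSet_subset_image_target (o : O) :
    M.stepSet U i o ⊆ M.target i '' M.arrowSet U i := by
  rintro p ⟨q, hqU, hq⟩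
  exact ⟨q, ⟨hqU, by simp [hq]⟩, target_eq_of_trans_eq_some hq⟩

theorem stepSet_eq_image_target {o' : O}
    (hout : ∀ q ∈ U, ∀ o p, M.trans q i = some (o, p) → o = o') :
    M.stepSet U i o' = M.target i '' M.arrowSet U i := by
  refine (stepSet_subset_image_target o').antisymm ?_
  rintro _ ⟨q, ⟨hqU, hqi⟩, rfl⟩
  obtain ⟨⟨o, p⟩, hq⟩ := Option.isSome_iff_exists.1 hqi
  obtain rfl := hout q hqU o p hq
  exact ⟨q, hqU, by rw [hq, target_eq_of_trans_eq_some hq]⟩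

theorem IsTree.injOn_target (htree : M.IsTree) : Set.InjOn (M.target i) (M.arrowSet U i) := by
  rintro q ⟨-, hqi⟩ p ⟨-, hpi⟩ hqp
  obtain ⟨⟨o, q'⟩, hq⟩ := Option.isSome_iff_exists.1 hqi
  obtain ⟨⟨o', p'⟩, hp⟩ := Option.isSome_iff_exists.1 hpi
  rw [target_eq_of_trans_eq_some hq, target_eq_of_trans_eq_some hp] at hqp
  subst hqp
  exact htree.eq_of_trans_eq_some hq hp

theorem ncard_stepSet_le [Finite Q] (o : O) : (M.stepSet U i o).ncard ≤ (M.arrowSet U i).ncard :=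
  (Set.ncard_le_ncard (stepSet_subset_image_target o)).trans (Set.ncard_image_le)

theorem IsTree.ncard_stepSet_eq [Finite Q] (htree : M.IsTree) {o' : O}
    (hout : ∀ q ∈ U, ∀ o p, M.trans q i = some (o, p) → o = o') :
    (M.stepSet U i o').ncard = (M.arrowSet U i).ncard := by
  rw [stepSet_eq_image_target hout, htree.injOn_target.ncard_image]

variable [Fintype O] {E' : Set Q → ℚ}

theorem rewardAux_nonneg [Finite Q] (hE' : ∀ V, 0 ≤ E' V) : 0 ≤ M.rewardAux E' U i := by
  refine Finset.sum_nonneg fun o _ => div_nonneg (mul_nonneg (by positivity) ?_) (by positivity)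
  have := (Nat.cast_le (α := ℚ)).2 (ncard_stepSet_le (M := M) (U := U) (i := i) o)
  linarith [hE' (M.stepSet U i o)]

theorem rewardAux_mono {E₁ E₂ : Set Q → ℚ} (h : ∀ V, E₁ V ≤ E₂ V) :
    M.rewardAux E₁ U i ≤ M.rewardAux E₂ U i := by
  refine Finset.sum_le_sum fun o _ => div_le_div_of_nonneg_right ?_ (by positivity)
  gcongr
  exact h _

theorem IsTree.rewardAux_eq [Finite Q] (htree : M.IsTree) {o' : O}
    (hi : (M.arrowSet U i).Nonempty)
    (hout : ∀ q ∈ U, ∀ o p, M.trans q i = some (o, p) → o = o') :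
    M.rewardAux E' U i = E' (M.stepSet U i o') := by
  have hpos : ((M.arrowSet U i).ncard : ℚ) ≠ 0 := by
    exact_mod_cast ((Set.ncard_pos).2 hi).ne'
  have hempty : ∀ o ≠ o', M.stepSet U i o = ∅ := fun o ho =>
    Set.eq_empty_iff_forall_notMem.2 fun p ⟨q, hqU, hq⟩ => ho (hout q hqU o p hq)
  rw [rewardAux, Finset.sum_eq_single o' (fun o _ ho => by simp [hempty o ho]) (by simp),
    htree.ncard_stepSet_eq hout]
  field_simp
  ring

variable (M) [Fintype I]

theorem Efuel_nonneg [Finite Q] (n : ℕ) (U : Set Q) : 0 ≤ M.Efuel n U := by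
  induction n generalizing U with
  | zero => exact le_rfl
  | succ n ih => exact Finset.le_unbotD_max_image fun i _ => rewardAux_nonneg ih

theorem Efuel_le_Efuel_succ [Finite Q] (n : ℕ) (U : Set Q) : M.Efuel n U ≤ M.Efuel (n + 1) U := by
  induction n generalizing U with
  | zero => exact M.Efuel_nonneg 1 U
  | succ n ih => exact Finset.unbotD_max_image_mono fun i _ => rewardAux_mono ih

variable {M} [Fintype Q]

theorem expectedReward_eq_zero (h : M.inpSet U = ∅) : M.expectedReward U = 0 := by
  simp [expectedReward, Efuel, h]

/-- The collapse of `IsTree.rewardAux_eq` lands on one unit less of fuel; monotonicity of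
`Efuel` in the fuel bridges the gap. -/
theorem IsTree.expectedReward_le_of_forall_output_eq (htree : M.IsTree) {o' : O}
    (hi : i ∈ M.inpSet U) (hmax : M.rewardFor U i = M.expectedReward U)
    (hout : ∀ q ∈ U, ∀ o p, M.trans q i = some (o, p) → o = o') :
    M.expectedReward U ≤ M.expectedReward (M.stepSet U i o') := by
  have hne : (M.arrowSet U i).Nonempty := by simpa [inpSet, arrowSet, Set.Nonempty] using hi
  rw [← hmax, rewardFor, htree.rewardAux_eq hne hout]
  exact M.Efuel_le_Efuel_succ _ _

end Reward

theorem IsTree.exists_output_ne_of_path [Fintype Q] [Fintype I] [Fintype O] {M : Mealy Q I O}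
    (htree : M.IsTree) {l : ℕ} {Us : ℕ → Set Q} {ins : ℕ → I} {outs : ℕ → O}
    (hE : 0 < M.expectedReward (Us 0))
    (hstep : ∀ j < l, ins j ∈ M.inpSet (Us j) ∧
      M.rewardFor (Us j) (ins j) = M.expectedReward (Us j) ∧
      Us (j + 1) = M.stepSet (Us j) (ins j) (outs j))
    (hend : M.inpSet (Us l) = ∅) :
    ∃ j < l, ∃ q ∈ Us j, ∃ o p, M.trans q (ins j) = some (o, p) ∧ o ≠ outs j := by
  by_contra! hsplit
  have hmono : ∀ j ≤ l, M.expectedReward (Us 0) ≤ M.expectedReward (Us j) := by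
    intro j hj
    induction j with
    | zero => exact le_rfl
    | succ j ih =>
      obtain ⟨hi, hmax, hUs⟩ := hstep j hj
      rw [hUs]
      exact (ih (by omega)).trans
        (htree.expectedReward_le_of_forall_output_eq hi hmax (hsplit j hj))
  linarith [hmono l le_rfl, expectedReward_eq_zero hend]

end Mealy

/-- Let `T` be a tree Mealy machine (finite `O`) and `U` with
`E(U) > 0`.  Let `σ = i₁…i_ℓ` be the input word along any maximal ADS path from
`U`: there are sets `U = U₀, U₁, …, U_ℓ` and outputs `o₁, …, o_ℓ` such that each
`i_{j+1} ∈ inp(U_j)` attains the maximum in the definition of `E(U_j)`,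
`U_{j+1} = U_j →^{i_{j+1}/o_{j+1}}` is nonempty, and `inp(U_ℓ) = ∅`.  Then
there are `r, r' ∈ U` and a prefix `τ` of `σ` with `λ^T(r, τ)` and `λ^T(r', τ)`
both defined and different (so a prefix of `σ` witnesses `r # r'`). -/
theorem statement_16 {Q I O : Type} [Fintype Q] [Fintype I] [Fintype O]
    (T : Mealy Q I O) (htree : T.IsTree) (U : Set Q)
    (hE : 0 < T.expectedReward U)
    (l : ℕ) (Us : ℕ → Set Q) (ins : ℕ → I) (outs : ℕ → O)
    (h0 : Us 0 = U)
    (hstep : ∀ j < l,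
      ins j ∈ T.inpSet (Us j) ∧
      T.rewardFor (Us j) (ins j) = T.expectedReward (Us j) ∧
      Us (j + 1) = T.stepSet (Us j) (ins j) (outs j) ∧
      (Us (j + 1)).Nonempty)
    (hend : T.inpSet (Us l) = ∅) :
    ∃ r ∈ U, ∃ r' ∈ U, ∃ τ : List I,
      τ <+: List.ofFn (fun j : Fin l => ins j) ∧
      (T.outStar r τ).isSome ∧ (T.outStar r' τ).isSome ∧
      T.outStar r τ ≠ T.outStar r' τ := by
  subst h0
  obtain ⟨j, hj, q, hq, o, p, hqp, ho⟩ := htree.exists_output_ne_of_path hE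
    (fun j hj => ⟨(hstep j hj).1, (hstep j hj).2.1, (hstep j hj).2.2.1⟩) hend
  obtain ⟨p', q', hq', hqp'⟩ : ∃ p' q', q' ∈ Us j ∧ T.trans q' (ins j) = some (outs j, p') := by
    obtain ⟨-, -, hUs, hne⟩ := hstep j hj
    rw [hUs] at hne
    exact hne
  have hrun : ∀ k < j, Us (k + 1) = T.stepSet (Us k) (ins k) (outs k) :=
    fun k hk => (hstep k (hk.trans hj)).2.2.1
  obtain ⟨r, hr, hrq⟩ := Mealy.exists_stepStar_of_mem hrun hq
  obtain ⟨r', hr', hrq'⟩ := Mealy.exists_stepStar_of_mem hrun hq'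
  refine ⟨r, hr, r', hr', List.ofFn fun k : Fin (j + 1) => ins k, List.ofFn_prefix_ofFn ins hj, ?_⟩
  rw [Mealy.outStar, Mealy.outStar, Mealy.stepStar_ofFn_succ hrq hqp,
    Mealy.stepStar_ofFn_succ hrq' hqp']
  simpa using ho
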